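/- arXiv:1004.0282 — 4 statements merged into one kernel-verified Lean document; each statement's English description precedes it below -/
import Mathlib

section
/- Let M_c(t) denote the number of 3×3 magic squares all of whose entries lie strictly between 0 and t. Then for every integer t ≥ 1: 6·M_c(t) = (t−2)(t−6)(t−8) if t ≡ 0, 2, 6, or 8 (mod 12); 6·M_c(t) = (t−1)(t²−15t+58) if t ≡ 1 (mod 12); 6·M_c(t) = (t−3)(t²−13t+34) if t ≡ 3 or 11 (mod 12); 6·M_c(t) = (t−4)(t²−12t+28) if t ≡ 4 or 10 (mod 12); 6·M_c(t) = (t−2)(t−5)(t−9) if t ≡ 5 or 9 (mod 12); and 6·M_c(t) = (t−7)(t²−9t+10) if t ≡ 7 (mod 12). -/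
/-- A 3×3 magic square: all nine entries distinct, all row sums, column sums,
the main diagonal sum and the antidiagonal sum equal. -/
def IsMagicSq (x : Matrix (Fin 3) (Fin 3) ℤ) : Prop :=
  (Function.Injective fun p : Fin 3 × Fin 3 => x p.1 p.2) ∧
  ∃ s : ℤ, (∀ i, ∑ j, x i j = s) ∧ (∀ j, ∑ i, x i j = s) ∧
    x 0 0 + x 1 1 + x 2 2 = s ∧ x 0 2 + x 1 1 + x 2 0 = s

/-- `Mc t` = number of 3×3 magic squares all of whose entries lie strictly
between 0 and t. -/
noncomputable def Mc (t : ℕ) : ℕ :=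
  {x : Matrix (Fin 3) (Fin 3) ℤ |
    IsMagicSq x ∧ ∀ i j, 0 < x i j ∧ x i j < (t : ℤ)}.ncard

/-!
Every 3×3 magic square has Lucas' form: centre `c`, magic sum `3c`, and entries
`c`, `c ± a`, `c ± b`, `c ± (a + b)`, `c ± (a - b)`. Its entries are distinct iff none of
`a, b, a ± b, a ± 2b, b ± 2a` vanishes, and they lie in `(0, t)` iff `|a| + |b| < c` and
`c + |a| + |b| < t`. For `k = |a| + |b|` there are `4 w(k)` admissible pairs `(a, b)`, where
`w(k) = k - 1 - [2 ∣ k] - 2 [3 ∣ k]` counts the admissible splittings `k = a + b` with `a, b > 0`,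
and each pair allows `t - 1 - 2k` centres. Hence `M_c(t) = 4 ∑ₖ w(k) (t - 1 - 2k)⁺`. The second
difference in `t` of this sum is `4 w(t/2)` for even `t` and `0` for odd `t`; the claimed
quasi-polynomial has the same second differences and agrees with `6 M_c` at `t = 1, 2`.
-/

open Finset

def lucasSquare (c a b : ℤ) : Matrix (Fin 3) (Fin 3) ℤ :=
  !![c + a, c - a - b, c + b; c - a + b, c, c + a - b; c - b, c + a + b, c - a]

def LucasAdmissible (a b : ℤ) : Prop :=
  a ≠ 0 ∧ b ≠ 0 ∧ a ≠ b ∧ a ≠ -b ∧ b ≠ 2 * a ∧ b ≠ -(2 * a) ∧ a ≠ 2 * b ∧ a ≠ -(2 * b)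

instance (a b : ℤ) : Decidable (LucasAdmissible a b) := by
  unfold LucasAdmissible; infer_instance

theorem eq_lucasSquare_of_lineSums {x : Matrix (Fin 3) (Fin 3) ℤ} {s : ℤ}
    (hrow : ∀ i, ∑ j, x i j = s) (hcol : ∀ j, ∑ i, x i j = s)
    (hdiag : x 0 0 + x 1 1 + x 2 2 = s) (hanti : x 0 2 + x 1 1 + x 2 0 = s) :
    x = lucasSquare (x 1 1) (x 0 0 - x 1 1) (x 0 2 - x 1 1) := by
  have := hrow 0; have := hrow 1; have := hrow 2
  have := hcol 0; have := hcol 1; have := hcol 2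
  simp only [Fin.sum_univ_three] at *
  ext i j
  fin_cases i <;> fin_cases j <;> simp [lucasSquare] <;> omega

theorem lucasSquare_lineSums (c a b : ℤ) :
    (∀ i, ∑ j, lucasSquare c a b i j = 3 * c) ∧ (∀ j, ∑ i, lucasSquare c a b i j = 3 * c) ∧
      lucasSquare c a b 0 0 + lucasSquare c a b 1 1 + lucasSquare c a b 2 2 = 3 * c ∧
      lucasSquare c a b 0 2 + lucasSquare c a b 1 1 + lucasSquare c a b 2 0 = 3 * c := by
  refine ⟨fun i => ?_, fun j => ?_, ?_, ?_⟩
  · fin_cases i <;> simp [lucasSquare, Fin.sum_univ_three] <;> ring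
  · fin_cases j <;> simp [lucasSquare, Fin.sum_univ_three] <;> ring
  · simp [lucasSquare]; ring
  · simp [lucasSquare]; ring

theorem lucasSquare_entries_injective_iff {c a b : ℤ} :
    (Function.Injective fun p : Fin 3 × Fin 3 => lucasSquare c a b p.1 p.2) ↔
      LucasAdmissible a b := by
  constructor
  · intro hinj
    have ne : ∀ i j k l : Fin 3, (i, j) ≠ (k, l) →
        lucasSquare c a b i j ≠ lucasSquare c a b k l :=
      fun i j k l hne h => hne (hinj h)
    refine ⟨?_, ?_, ?_, ?_, ?_, ?_, ?_, ?_⟩ <;> intro h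
    · exact ne 0 0 1 1 (by decide) (by simp [lucasSquare, h])
    · exact ne 0 2 1 1 (by decide) (by simp [lucasSquare, h])
    · exact ne 0 0 0 2 (by decide) (by simp [lucasSquare, h])
    · exact ne 0 0 2 0 (by decide) (by simp [lucasSquare]; omega)
    · exact ne 0 0 1 0 (by decide) (by simp [lucasSquare]; omega)
    · exact ne 0 0 0 1 (by decide) (by simp [lucasSquare]; omega)
    · exact ne 0 2 1 2 (by decide) (by simp [lucasSquare]; omega)
    · exact ne 2 0 2 1 (by decide) (by simp [lucasSquare]; omega)
  · rintro ⟨h1, h2, h3, h4, h5, h6, h7, h8⟩ ⟨i, j⟩ ⟨k, l⟩ h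
    fin_cases i <;> fin_cases j <;> fin_cases k <;> fin_cases l <;>
      first
      | rfl
      | (simp [lucasSquare] at h; omega)

theorem isMagicSq_lucasSquare_iff {c a b : ℤ} :
    IsMagicSq (lucasSquare c a b) ↔ LucasAdmissible a b := by
  rw [IsMagicSq, lucasSquare_entries_injective_iff, and_iff_left_iff_imp]
  exact fun _ => ⟨3 * c, lucasSquare_lineSums c a b⟩

theorem lucasSquare_entries_pos_lt_iff {c a b t : ℤ} :
    (∀ i j, 0 < lucasSquare c a b i j ∧ lucasSquare c a b i j < t) ↔
      (a.natAbs + b.natAbs : ℤ) < c ∧ c + (a.natAbs + b.natAbs) < t := by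
  constructor
  · intro h
    have h00 := h 0 0; have h01 := h 0 1; have h02 := h 0 2; have h10 := h 1 0
    have h12 := h 1 2; have h20 := h 2 0; have h21 := h 2 1; have h22 := h 2 2
    simp [lucasSquare] at h00 h01 h02 h10 h12 h20 h21 h22
    omega
  · intro h i j
    fin_cases i <;> fin_cases j <;> simp [lucasSquare] <;> omega

theorem lucasSquare_injective :
    Function.Injective fun p : ℤ × ℤ × ℤ => lucasSquare p.1 p.2.1 p.2.2 := by
  rintro ⟨c, a, b⟩ ⟨c', a', b'⟩ h
  have h11 := congrFun₂ h 1 1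
  have h00 := congrFun₂ h 0 0
  have h02 := congrFun₂ h 0 2
  simp [lucasSquare] at h11 h00 h02
  simp only [Prod.mk.injEq]
  omega

noncomputable def admissibleSplits (k : ℕ) : Finset ℤ :=
  (Ioo 0 (k : ℤ)).filter fun a => LucasAdmissible a (k - a)

theorem card_admissibleSplits {k : ℕ} (hk : 1 ≤ k) :
    (#(admissibleSplits k) : ℤ) =
      k - 1 - (if 2 ∣ k then 1 else 0) - 2 * (if 3 ∣ k then 1 else 0) := by
  obtain ⟨E, hE, hcard⟩ : ∃ E : Finset ℤ,
      (Ioo 0 (k : ℤ)).filter (fun a => ¬LucasAdmissible a (k - a)) = E ∧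
      (#E : ℤ) = (if 2 ∣ k then 1 else 0) + 2 * (if 3 ∣ k then 1 else 0) := by
    by_cases h2 : 2 ∣ k <;> by_cases h3 : 3 ∣ k <;> simp only [h2, h3, if_true, if_false]
    · obtain ⟨m, rfl⟩ : ∃ m, k = 6 * m := ⟨k / 6, by omega⟩
      refine ⟨{(2 * m : ℤ), (3 * m : ℤ), (4 * m : ℤ)}, ?_, ?_⟩
      · ext a
        rw [mem_filter, LucasAdmissible]
        simp only [mem_Ioo, mem_insert, mem_singleton]
        omega
      · rw [card_eq_three.2 ⟨_, _, _, by omega, by omega, by omega, rfl⟩]; rfl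
    · obtain ⟨m, rfl⟩ : ∃ m, k = 2 * m := ⟨k / 2, by omega⟩
      refine ⟨{(m : ℤ)}, ?_, rfl⟩
      ext a
      rw [mem_filter, LucasAdmissible]
      simp only [mem_Ioo, mem_singleton]
      omega
    · obtain ⟨m, rfl⟩ : ∃ m, k = 3 * m := ⟨k / 3, by omega⟩
      refine ⟨{(m : ℤ), (2 * m : ℤ)}, ?_, ?_⟩
      · ext a
        rw [mem_filter, LucasAdmissible]
        simp only [mem_Ioo, mem_insert, mem_singleton]
        omega
      · rw [card_pair (by omega)]; rfl
    · refine ⟨∅, filter_eq_empty_iff.2 fun a ha => ?_, rfl⟩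
      rw [mem_Ioo] at ha
      rw [not_not, LucasAdmissible]
      omega
  have hsplit := card_filter_add_card_filter_not (s := Ioo 0 (k : ℤ))
    (fun a => LucasAdmissible a (k - a))
  rw [hE, Int.card_Ioo] at hsplit
  rw [admissibleSplits]
  omega

noncomputable def admissiblePairs (k : ℕ) : Finset (ℤ × ℤ) :=
  (Icc (-(k : ℤ)) k ×ˢ Icc (-(k : ℤ)) k).filter fun p =>
    LucasAdmissible p.1 p.2 ∧ p.1.natAbs + p.2.natAbs = k

theorem mem_admissibleSplits {k : ℕ} {a : ℤ} :
    a ∈ admissibleSplits k ↔ (0 < a ∧ a < k) ∧ LucasAdmissible a (k - a) := by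
  rw [admissibleSplits, mem_filter, mem_Ioo]

theorem mem_admissiblePairs {k : ℕ} {p : ℤ × ℤ} :
    p ∈ admissiblePairs k ↔ LucasAdmissible p.1 p.2 ∧ p.1.natAbs + p.2.natAbs = k := by
  rw [admissiblePairs, mem_filter, and_iff_right_iff_imp]
  rintro ⟨-, hk⟩
  simp only [mem_product, mem_Icc]
  omega

theorem card_admissiblePairs (k : ℕ) :
    #(admissiblePairs k) = 4 * #(admissibleSplits k) := by
  have hsigns : #(({-1, 1} : Finset ℤ) ×ˢ ({-1, 1} : Finset ℤ)) = 4 := by decide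
  rw [← hsigns, ← card_product, eq_comm]
  refine card_bij' (fun q _ => (q.1.1 * q.2, q.1.2 * (k - q.2)))
    (fun p _ => (((if 0 ≤ p.1 then 1 else -1 : ℤ), (if 0 ≤ p.2 then 1 else -1 : ℤ)),
      (p.1.natAbs : ℤ))) ?_ ?_ ?_ ?_ <;>
    simp only [mem_product, mem_insert, mem_singleton, mem_admissibleSplits,
      mem_admissiblePairs, Prod.forall, Prod.mk.injEq] <;>
    unfold LucasAdmissible
  · rintro s u a ⟨⟨hs, hu⟩, ha, hadm⟩
    rcases hs with rfl | rfl <;> rcases hu with rfl | rfl <;> omega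
  · intro a b hp
    split_ifs <;> omega
  · rintro s u a ⟨⟨hs, hu⟩, ha, -⟩
    rcases hs with rfl | rfl <;> rcases hu with rfl | rfl <;> split_ifs <;> omega
  · intro a b hp
    split_ifs <;> omega

noncomputable def lucasParams (t : ℕ) : Finset (ℤ × ℤ × ℤ) :=
  (Icc 1 (t : ℤ) ×ˢ Icc (-(t : ℤ)) t ×ˢ Icc (-(t : ℤ)) t).filter fun p =>
    LucasAdmissible p.2.1 p.2.2 ∧ (p.2.1.natAbs + p.2.2.natAbs : ℤ) < p.1 ∧
      p.1 + (p.2.1.natAbs + p.2.2.natAbs) < t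

theorem mem_lucasParams {t : ℕ} {p : ℤ × ℤ × ℤ} :
    p ∈ lucasParams t ↔ LucasAdmissible p.2.1 p.2.2 ∧
      (p.2.1.natAbs + p.2.2.natAbs : ℤ) < p.1 ∧ p.1 + (p.2.1.natAbs + p.2.2.natAbs) < t := by
  rw [lucasParams, mem_filter, and_iff_right_iff_imp]
  rintro ⟨-, h1, h2⟩
  simp only [mem_product, mem_Icc]
  omega

theorem magicSquares_eq_image_lucasParams (t : ℕ) :
    {x : Matrix (Fin 3) (Fin 3) ℤ | IsMagicSq x ∧ ∀ i j, 0 < x i j ∧ x i j < (t : ℤ)} =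
      (fun p : ℤ × ℤ × ℤ => lucasSquare p.1 p.2.1 p.2.2) '' lucasParams t := by
  ext x
  constructor
  · rintro ⟨hmagic, hbound⟩
    obtain ⟨s, hrow, hcol, hdiag, hanti⟩ := hmagic.2
    have hx := eq_lucasSquare_of_lineSums hrow hcol hdiag hanti
    rw [hx, isMagicSq_lucasSquare_iff] at hmagic
    rw [hx, lucasSquare_entries_pos_lt_iff] at hbound
    exact ⟨(x 1 1, x 0 0 - x 1 1, x 0 2 - x 1 1), mem_lucasParams.2 ⟨hmagic, hbound⟩, hx.symm⟩
  · rintro ⟨p, hp, rfl⟩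
    obtain ⟨hadm, hbound⟩ := mem_lucasParams.1 hp
    exact ⟨isMagicSq_lucasSquare_iff.2 hadm, lucasSquare_entries_pos_lt_iff.2 hbound⟩

theorem Mc_eq_card_lucasParams (t : ℕ) : Mc t = #(lucasParams t) := by
  rw [Mc, magicSquares_eq_image_lucasParams, Set.ncard_image_of_injective _ lucasSquare_injective,
    Set.ncard_coe_finset]

theorem filter_lucasParams_natAbs_add_eq (t k : ℕ) :
    (lucasParams t).filter (fun p => p.2.1.natAbs + p.2.2.natAbs = k) =
      Icc ((k : ℤ) + 1) (t - 1 - k) ×ˢ admissiblePairs k := by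
  ext ⟨c, a, b⟩
  rw [mem_filter, mem_lucasParams, mem_product, mem_admissiblePairs, mem_Icc]
  constructor
  · rintro ⟨⟨hadm, h1, h2⟩, hk⟩
    exact ⟨⟨by omega, by omega⟩, hadm, hk⟩
  · rintro ⟨hc, hadm, hk⟩
    exact ⟨⟨hadm, by omega, by omega⟩, hk⟩

-- The truncated subtraction is intended: `t - 1 - 2 * k` counts the centres `c` with
-- `k < c` and `c + k < t`.
noncomputable def lucasCount (t : ℕ) : ℕ :=
  ∑ k ∈ range t, #(admissibleSplits k) * (t - 1 - 2 * k)

theorem card_lucasParams (t : ℕ) : #(lucasParams t) = 4 * lucasCount t := by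
  rw [card_eq_sum_card_fiberwise (f := fun p => p.2.1.natAbs + p.2.2.natAbs) (t := range t),
    lucasCount, mul_sum]
  · refine sum_congr rfl fun k _ => ?_
    rw [filter_lucasParams_natAbs_add_eq, card_product, card_admissiblePairs, Int.card_Icc]
    rw [show ((t : ℤ) - 1 - k + 1 - (k + 1)).toNat = t - 1 - 2 * k by omega]
    ring
  · intro p hp
    rw [mem_coe, mem_lucasParams] at hp
    rw [mem_coe, mem_range]
    dsimp only
    omega

theorem lucasCount_eq_sum_range {t N : ℕ} (h : t ≤ N) :
    lucasCount t = ∑ k ∈ range N, #(admissibleSplits k) * (t - 1 - 2 * k) :=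
  sum_subset (range_subset_range.2 h) fun k _ hk => by
    rw [mem_range] at hk
    rw [show t - 1 - 2 * k = 0 by omega, mul_zero]

theorem lucasCount_add_two (t : ℕ) :
    lucasCount (t + 2) + lucasCount t =
      2 * lucasCount (t + 1) + if 2 ∣ t then #(admissibleSplits (t / 2)) else 0 := by
  rw [lucasCount_eq_sum_range le_rfl, lucasCount_eq_sum_range (N := t + 2) (by omega),
    lucasCount_eq_sum_range (N := t + 2) (by omega), mul_sum, ← sum_add_distrib]
  have hkink : ∀ k, (t + 2 - 1 - 2 * k) + (t - 1 - 2 * k) =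
      2 * (t + 1 - 1 - 2 * k) + if t = 2 * k then 1 else 0 := by
    intro k; split_ifs <;> omega
  simp_rw [← mul_add, hkink, mul_add, sum_add_distrib, mul_ite, mul_one, mul_zero, mul_left_comm]
  congr 1
  split_ifs with h2
  · obtain ⟨m, rfl⟩ := h2
    simp only [mul_right_inj' two_ne_zero, sum_ite_eq, mem_range]
    rw [if_pos (by omega), Nat.mul_div_cancel_left m two_pos]
  · exact sum_eq_zero fun k _ => if_neg fun h => h2 ⟨k, h⟩

theorem eq_of_secondDiff_eq {G : Type*} [AddCommGroup G] {f g : ℕ → G} (h0 : f 0 = g 0)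
    (h1 : f 1 = g 1)
    (h : ∀ n, f (n + 2) - 2 • f (n + 1) + f n = g (n + 2) - 2 • g (n + 1) + g n) : f = g := by
  have key : ∀ n, f n = g n ∧ f (n + 1) = g (n + 1) := by
    intro n
    induction n with
    | zero => exact ⟨h0, h1⟩
    | succ n ih =>
      refine ⟨ih.2, ?_⟩
      simpa [ih.1, ih.2] using h n
  exact funext fun n => (key n).1

def magicCubic (t : ℕ) : ℤ :=
  match t % 12 with
  | 1 => ((t : ℤ) - 1) * ((t : ℤ) ^ 2 - 15 * t + 58)
  | 3 | 11 => ((t : ℤ) - 3) * ((t : ℤ) ^ 2 - 13 * t + 34)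
  | 4 | 10 => ((t : ℤ) - 4) * ((t : ℤ) ^ 2 - 12 * t + 28)
  | 5 | 9 => ((t : ℤ) - 2) * ((t : ℤ) - 5) * ((t : ℤ) - 9)
  | 7 => ((t : ℤ) - 7) * ((t : ℤ) ^ 2 - 9 * t + 10)
  | _ => ((t : ℤ) - 2) * ((t : ℤ) - 6) * ((t : ℤ) - 8)

theorem magicCubic_add_two (t : ℕ) :
    magicCubic (t + 2) - 2 * magicCubic (t + 1) + magicCubic t =
      if 2 ∣ t then
        24 * (((t / 2 : ℕ) : ℤ) - 1 - (if 2 ∣ t / 2 then 1 else 0) - 2 * (if 3 ∣ t / 2 then 1 else 0))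
      else 0 := by
  obtain ⟨q, r, hr, rfl⟩ : ∃ q r, r < 12 ∧ t = 12 * q + r :=
    ⟨t / 12, t % 12, Nat.mod_lt _ (by norm_num), (Nat.div_add_mod t 12).symm⟩
  have hmod : ∀ s, (12 * q + s) % 12 = s % 12 := by omega
  have hdiv : ∀ s, (12 * q + s) / 2 = 6 * q + s / 2 := by omega
  have h2 : ∀ s, 2 ∣ 6 * q + s ↔ 2 ∣ s := by omega
  have h3 : ∀ s, 3 ∣ 6 * q + s ↔ 3 ∣ s := by omega
  have h2' : ∀ s, 2 ∣ 12 * q + s ↔ 2 ∣ s := by omega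
  interval_cases r <;>
    simp only [magicCubic, add_assoc, Nat.reduceAdd, hmod, Nat.reduceMod, hdiv, h2, h3, h2',
      Nat.reduceDiv] <;> norm_num <;> ring

theorem twentyFour_mul_lucasCount {t : ℕ} (ht : 1 ≤ t) : 24 * (lucasCount t : ℤ) = magicCubic t := by
  obtain ⟨n, rfl⟩ : ∃ n, t = n + 1 := ⟨t - 1, by omega⟩
  suffices (fun n => 24 * (lucasCount (n + 1) : ℤ)) = fun n => magicCubic (n + 1) from
    congrFun this n
  refine eq_of_secondDiff_eq ?_ ?_ fun n => ?_
  · simp [lucasCount, magicCubic]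
  · simp [lucasCount, magicCubic, admissibleSplits, sum_range_succ]
  · have h := congrArg (fun m : ℕ => (m : ℤ)) (lucasCount_add_two (n + 1))
    have hP := magicCubic_add_two (n + 1)
    push_cast at h
    rw [nsmul_eq_mul, nsmul_eq_mul, show n + 2 + 1 = n + 1 + 2 from rfl]
    by_cases heven : 2 ∣ n + 1
    · rw [if_pos heven, card_admissibleSplits (by omega)] at h
      rw [if_pos heven] at hP
      linear_combination 24 * h - hP
    · rw [if_neg heven] at h hP
      linear_combination 24 * h - hP

theorem magic_cubic_count (t : ℕ) (ht : 1 ≤ t) :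
    ((t % 12 = 0 ∨ t % 12 = 2 ∨ t % 12 = 6 ∨ t % 12 = 8) →
      6 * (Mc t : ℤ) = ((t : ℤ) - 2) * ((t : ℤ) - 6) * ((t : ℤ) - 8)) ∧
    (t % 12 = 1 →
      6 * (Mc t : ℤ) = ((t : ℤ) - 1) * ((t : ℤ)^2 - 15*(t : ℤ) + 58)) ∧
    ((t % 12 = 3 ∨ t % 12 = 11) →
      6 * (Mc t : ℤ) = ((t : ℤ) - 3) * ((t : ℤ)^2 - 13*(t : ℤ) + 34)) ∧
    ((t % 12 = 4 ∨ t % 12 = 10) →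
      6 * (Mc t : ℤ) = ((t : ℤ) - 4) * ((t : ℤ)^2 - 12*(t : ℤ) + 28)) ∧
    ((t % 12 = 5 ∨ t % 12 = 9) →
      6 * (Mc t : ℤ) = ((t : ℤ) - 2) * ((t : ℤ) - 5) * ((t : ℤ) - 9)) ∧
    (t % 12 = 7 →
      6 * (Mc t : ℤ) = ((t : ℤ) - 7) * ((t : ℤ)^2 - 9*(t : ℤ) + 10)) := by
  have hcount : 6 * (Mc t : ℤ) = magicCubic t := by
    rw [← twentyFour_mul_lucasCount ht, Mc_eq_card_lucasParams, card_lucasParams]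
    push_cast
    ring
  rw [hcount, magicCubic]
  refine ⟨?_, ?_, ?_, ?_, ?_, ?_⟩
  · rintro (h | h | h | h) <;> simp only [h]
  · intro h; simp only [h]
  · rintro (h | h) <;> simp only [h]
  · rintro (h | h) <;> simp only [h]
  · rintro (h | h) <;> simp only [h]
  · intro h; simp only [h]
end

section
/- A 3×3 matrix x of nonnegative integers is a reduced normalized semimagic square — meaning: all nine entries are distinct, the three row sums and the three column sums are all equal, x₁₁ = 0, x₁₁ < x₁₂ < x₁₃, x₁₁ < x₂₁ < x₃₁, and x₁₂ < x₂₁ — if and only if there exist integers α, β, γ, δ with α > 0, β > 0, γ > 0, 0 < δ < β, 2δ ∉ {β−α, β, β+γ, α+β+γ}, δ ∉ {β−α, α+γ, γ}, and x = [[0, β, 2α+β+γ], [α+β, α+β+γ−δ, δ], [α+β+γ, α+δ, β−δ]]. In that case the largest entry of x is x₁₃ = 2α+β+γ and the common row/column sum is 2α+2β+γ. -/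
private lemma mat3_congr {a b c d e f g h i a' b' c' d' e' f' g' h' i' : ℤ}
    (h1 : a = a') (h2 : b = b') (h3 : c = c') (h4 : d = d') (h5 : e = e')
    (h6 : f = f') (h7 : g = g') (h8 : h = h') (h9 : i = i') :
    !![a, b, c; d, e, f; g, h, i] = !![a', b', c'; d', e', f'; g', h', i'] := by
  subst h1 h2 h3 h4 h5 h6 h7 h8 h9; rfl

theorem reduced_normalized_semimagic_characterization
    (x : Matrix (Fin 3) (Fin 3) ℤ) (hx : ∀ i j, 0 ≤ x i j) :
    ((Function.Injective fun p : Fin 3 × Fin 3 => x p.1 p.2) ∧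
     (∃ s : ℤ, (∀ i, ∑ j, x i j = s) ∧ (∀ j, ∑ i, x i j = s)) ∧
     x 0 0 = 0 ∧ x 0 0 < x 0 1 ∧ x 0 1 < x 0 2 ∧
     x 0 0 < x 1 0 ∧ x 1 0 < x 2 0 ∧ x 0 1 < x 1 0)
    ↔
    (∃ α β γ δ : ℤ, 0 < α ∧ 0 < β ∧ 0 < γ ∧ 0 < δ ∧ δ < β ∧
      2 * δ ≠ β - α ∧ 2 * δ ≠ β ∧ 2 * δ ≠ β + γ ∧ 2 * δ ≠ α + β + γ ∧
      δ ≠ β - α ∧ δ ≠ α + γ ∧ δ ≠ γ ∧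
      x = !![0, β, 2*α + β + γ;
             α + β, α + β + γ - δ, δ;
             α + β + γ, α + δ, β - δ] ∧
      -- in that case the largest entry is x₁₃ = 2α+β+γ
      x 0 2 = 2*α + β + γ ∧ (∀ i j, x i j ≤ x 0 2) ∧
      -- and the common row/column sum is 2α+2β+γ
      (∀ i, ∑ j, x i j = 2*α + 2*β + γ) ∧
      (∀ j, ∑ i, x i j = 2*α + 2*β + γ)) := by
  constructor
  · rintro ⟨hinj, ⟨s, hrow, hcol⟩, h00, h01, h02, h10, h20, h0110⟩
    have ne : ∀ p q : Fin 3 × Fin 3, p ≠ q → x p.1 p.2 ≠ x q.1 q.2 := by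
      intro p q hpq he; exact hpq (hinj he)
    have r0 := hrow 0; have r1 := hrow 1; have r2 := hrow 2
    have c0 := hcol 0; have c1 := hcol 1; have c2 := hcol 2
    simp only [Fin.sum_univ_three] at r0 r1 r2 c0 c1 c2
    have n1 : x 2 1 ≠ x 2 2 := ne (2,1) (2,2) (by decide)
    have n2 : x 1 2 ≠ x 2 2 := ne (1,2) (2,2) (by decide)
    have n3 : x 1 1 ≠ x 2 1 := ne (1,1) (2,1) (by decide)
    have n4 : x 1 1 ≠ x 1 2 := ne (1,1) (1,2) (by decide)
    have n5 : x 2 1 ≠ x 0 1 := ne (2,1) (0,1) (by decide)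
    have n6 : x 1 1 ≠ x 0 1 := ne (1,1) (0,1) (by decide)
    have n7 : x 1 1 ≠ x 1 0 := ne (1,1) (1,0) (by decide)
    have n8 : x 1 2 ≠ x 0 0 := ne (1,2) (0,0) (by decide)
    have n9 : x 2 2 ≠ x 0 0 := ne (2,2) (0,0) (by decide)
    have p12 := hx 1 2; have p22 := hx 2 2
    have hmat : x = !![0, x 0 1, 2*(x 1 0 - x 0 1) + x 0 1 + (x 2 0 - x 1 0);
        (x 1 0 - x 0 1) + x 0 1,
        (x 1 0 - x 0 1) + x 0 1 + (x 2 0 - x 1 0) - x 1 2, x 1 2;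
        (x 1 0 - x 0 1) + x 0 1 + (x 2 0 - x 1 0),
        (x 1 0 - x 0 1) + x 1 2, x 0 1 - x 1 2] :=
      (Matrix.eta_fin_three x).trans (mat3_congr (by omega) (by omega) (by omega)
        (by omega) (by omega) (by omega) (by omega) (by omega) (by omega))
    refine ⟨x 1 0 - x 0 1, x 0 1, x 2 0 - x 1 0, x 1 2,
      by omega, by omega, by omega, by omega, by omega,
      by omega, by omega, by omega, by omega,
      by omega, by omega, by omega, hmat, by omega, ?_, ?_, ?_⟩
    · intro i j
      rw [hmat]
      fin_cases i <;> fin_cases j <;> simp <;> omega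
    · intro i
      rw [hrow i]; omega
    · intro j
      rw [hcol j]; omega
  · rintro ⟨α, β, γ, δ, hα, hβ, hγ, hδ, hδβ, m1, m2, m3, m4, m5, m6, m7,
      hxe, h02, hmax, hrs, hcs⟩
    subst hxe
    refine ⟨?_, ⟨2*α + 2*β + γ, hrs, hcs⟩, ?_, ?_, ?_, ?_, ?_, ?_⟩ <;>
      clear hx h02 hmax hrs hcs
    · intro p q h
      fin_cases p <;> fin_cases q <;> simp at h ⊢ <;> omega
    all_goals simp <;> omega
end

section
/- A 3×3 matrix x of nonnegative integers is a reduced normalized magilatin square — meaning: the entries within each row are distinct and the entries within each column are distinct, the three row sums and the three column sums are all equal, x₁₁ = 0 and x₁₁ ≤ every entry, x₁₁ < x₁₂ < x₁₃, x₁₁ < x₂₁ < x₃₁, and x₁₂ ≤ x₂₁ — if and only if there exist integers α, β, γ, δ with α ≥ 0, β ≥ 1, γ ≥ 1, 0 ≤ δ ≤ β, 2δ ∉ {β−α, β, β+γ, α+β+γ}, δ ∉ {β−α, α+γ, γ}, and x = [[0, β, 2α+β+γ], [α+β, α+β+γ−δ, δ], [α+β+γ, α+δ, β−δ]]. -/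
theorem mat3_ext' {a b c d e f g h i a' b' c' d' e' f' g' h' i' : ℤ}
    (h1 : a = a') (h2 : b = b') (h3 : c = c') (h4 : d = d') (h5 : e = e')
    (h6 : f = f') (h7 : g = g') (h8 : h = h') (h9 : i = i') :
    !![a,b,c;d,e,f;g,h,i] = !![a',b',c';d',e',f';g',h',i'] := by
  subst h1 h2 h3 h4 h5 h6 h7 h8 h9; rfl

theorem magilatin_bwd (x : Matrix (Fin 3) (Fin 3) ℤ)
    (α β γ δ : ℤ) (ha : 0 ≤ α) (hb : 1 ≤ β) (hg : 1 ≤ γ) (hd0 : 0 ≤ δ) (hdb : δ ≤ β)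
    (e1 : 2 * δ ≠ β - α) (e2 : 2 * δ ≠ β) (e3 : 2 * δ ≠ β + γ) (e4 : 2 * δ ≠ α + β + γ)
    (e5 : δ ≠ β - α) (e6 : δ ≠ α + γ) (e7 : δ ≠ γ)
    (hxe : x = !![0, β, 2*α + β + γ;
             α + β, α + β + γ - δ, δ;
             α + β + γ, α + δ, β - δ]) :
    ((∀ i, Function.Injective fun j => x i j) ∧
     (∀ j, Function.Injective fun i => x i j) ∧
     (∃ s : ℤ, (∀ i, ∑ j, x i j = s) ∧ (∀ j, ∑ i, x i j = s)) ∧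
     x 0 0 = 0 ∧ (∀ i j, x 0 0 ≤ x i j) ∧
     x 0 0 < x 0 1 ∧ x 0 1 < x 0 2 ∧
     x 0 0 < x 1 0 ∧ x 1 0 < x 2 0 ∧ x 0 1 ≤ x 1 0) := by
  subst hxe
  refine ⟨?_, ?_, ⟨2*α + 2*β + γ, ?_, ?_⟩, ?_, ?_, ?_, ?_, ?_, ?_, ?_⟩
  · intro i a b hab
    fin_cases i <;> fin_cases a <;> fin_cases b <;>
      first | rfl | (exfalso; simp at hab; omega)
  · intro j a b hab
    fin_cases j <;> fin_cases a <;> fin_cases b <;>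
      first | rfl | (exfalso; simp at hab; omega)
  · intro i; fin_cases i <;> simp [Fin.sum_univ_three] <;> ring
  · intro j; fin_cases j <;> simp [Fin.sum_univ_three] <;> ring
  · simp
  · intro i j; fin_cases i <;> fin_cases j <;> simp <;> omega
  · simp; omega
  · simp; omega
  · simp; omega
  · simp; omega
  · simp; omega

theorem reduced_normalized_magilatin_characterization
    (x : Matrix (Fin 3) (Fin 3) ℤ) (hx : ∀ i j, 0 ≤ x i j) :
    ((∀ i, Function.Injective fun j => x i j) ∧
     (∀ j, Function.Injective fun i => x i j) ∧
     (∃ s : ℤ, (∀ i, ∑ j, x i j = s) ∧ (∀ j, ∑ i, x i j = s)) ∧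
     x 0 0 = 0 ∧ (∀ i j, x 0 0 ≤ x i j) ∧
     x 0 0 < x 0 1 ∧ x 0 1 < x 0 2 ∧
     x 0 0 < x 1 0 ∧ x 1 0 < x 2 0 ∧ x 0 1 ≤ x 1 0)
    ↔
    (∃ α β γ δ : ℤ, 0 ≤ α ∧ 1 ≤ β ∧ 1 ≤ γ ∧ 0 ≤ δ ∧ δ ≤ β ∧
      2 * δ ≠ β - α ∧ 2 * δ ≠ β ∧ 2 * δ ≠ β + γ ∧ 2 * δ ≠ α + β + γ ∧
      δ ≠ β - α ∧ δ ≠ α + γ ∧ δ ≠ γ ∧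
      x = !![0, β, 2*α + β + γ;
             α + β, α + β + γ - δ, δ;
             α + β + γ, α + δ, β - δ]) := by
  constructor
  · rintro ⟨hrow, hcol, ⟨s, hs1, hs2⟩, h00, hle, h1, h2, h3, h4, h5⟩
    have r0 := hs1 0; have r1 := hs1 1; have r2 := hs1 2
    have c0 := hs2 0; have c1 := hs2 1; have c2 := hs2 2
    simp only [Fin.sum_univ_three] at r0 r1 r2 c0 c1 c2
    have n1 : x 2 1 ≠ x 2 2 := fun h => absurd (hrow 2 h) (by decide)
    have n2 : x 1 2 ≠ x 2 2 := fun h => absurd (hcol 2 h) (by decide)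
    have n3 : x 1 1 ≠ x 2 1 := fun h => absurd (hcol 1 h) (by decide)
    have n4 : x 1 1 ≠ x 1 2 := fun h => absurd (hrow 1 h) (by decide)
    have n5 : x 0 1 ≠ x 2 1 := fun h => absurd (hcol 1 h) (by decide)
    have n6 : x 0 1 ≠ x 1 1 := fun h => absurd (hcol 1 h) (by decide)
    have n7 : x 1 0 ≠ x 1 1 := fun h => absurd (hrow 1 h) (by decide)
    have p1 := hx 1 2; have p2 := hx 2 2; have p3 := hx 1 1; have p4 := hx 2 1
    refine ⟨x 1 0 - x 0 1, x 0 1, x 2 0 - x 1 0, x 1 2,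
      by omega, by omega, by omega, by omega, by omega,
      by omega, by omega, by omega, by omega, by omega, by omega, by omega, ?_⟩
    conv_lhs => rw [Matrix.eta_fin_three x]
    exact mat3_ext' (by omega) (by omega) (by omega) (by omega) (by omega)
      (by omega) (by omega) (by omega) (by omega)
  · rintro ⟨α, β, γ, δ, ha, hb, hg, hd0, hdb, e1, e2, e3, e4, e5, e6, e7, hxe⟩
    exact magilatin_bwd x α β γ δ ha hb hg hd0 hdb e1 e2 e3 e4 e5 e6 e7 hxe
end

section
/- For every integer t ≥ 1, the number of 3×3 matrices of positive integers (entries not required to be distinct) whose three row sums and three column sums all equal t is (t−1)(t−2)(t²−3t+4)/8. -/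
open Finset

/-- pairs (a,b) with a+b ≤ s -/
def T2 (s : ℕ) : Finset (ℕ × ℕ) :=
  (range (s+1) ×ˢ range (s+1)).filter (fun p => p.1 + p.2 ≤ s)

lemma mem_T2 {s : ℕ} {p : ℕ × ℕ} : p ∈ T2 s ↔ p.1 + p.2 ≤ s := by
  simp [T2, mem_filter, mem_product, mem_range]; omega

/-- triples with sum ≤ s -/
def T3 (s : ℕ) : Finset (ℕ × ℕ × ℕ) :=
  (range (s+1) ×ˢ range (s+1) ×ˢ range (s+1)).filter
    (fun p => p.1 + p.2.1 + p.2.2 ≤ s)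

lemma mem_T3 {s : ℕ} {p : ℕ × ℕ × ℕ} : p ∈ T3 s ↔ p.1 + p.2.1 + p.2.2 ≤ s := by
  simp [T3, mem_filter, mem_product, mem_range]; omega

/-- quadruples with sum ≤ s -/
def T4 (s : ℕ) : Finset ((ℕ × ℕ) × ℕ × ℕ) :=
  ((range (s+1) ×ˢ range (s+1)) ×ˢ range (s+1) ×ˢ range (s+1)).filter
    (fun p => p.1.1 + p.1.2 + p.2.1 + p.2.2 ≤ s)

lemma mem_T4 {s : ℕ} {p : (ℕ × ℕ) × ℕ × ℕ} :
    p ∈ T4 s ↔ p.1.1 + p.1.2 + p.2.1 + p.2.2 ≤ s := by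
  simp [T4, mem_filter, mem_product, mem_range]; omega

lemma T2_succ (s : ℕ) :
    T2 (s+1) = T2 s ∪ (range (s+2)).image (fun a => (a, s+1-a)) := by
  ext p
  obtain ⟨a, b⟩ := p
  simp only [mem_T2, mem_union, mem_image, mem_range]
  constructor
  · intro h
    rcases Nat.lt_or_ge (a + b) (s+1) with h' | h'
    · left; omega
    · right; exact ⟨a, by omega, by simp only [Prod.mk.injEq, true_and, and_true]; omega⟩
  · rintro (h | ⟨a2, ha, heq⟩)
    · omega
    · simp only [Prod.mk.injEq] at heq; omega

lemma card_T2 (s : ℕ) : 2 * (T2 s).card = (s+1) * (s+2) := by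
  induction s with
  | zero => decide
  | succ s ih =>
    rw [T2_succ, card_union_of_disjoint, card_image_of_injective, card_range]
    · ring_nf; ring_nf at ih; omega
    · intro a b h; simpa using congrArg Prod.fst h
    · rw [Finset.disjoint_left]
      intro p hp hp2
      rw [mem_T2] at hp
      simp only [mem_image, mem_range] at hp2
      obtain ⟨a, ha, rfl⟩ := hp2
      simp at hp; omega

lemma T3_succ (s : ℕ) :
    T3 (s+1) = T3 s ∪ (T2 (s+1)).image (fun p => (p.1, p.2, s+1-p.1-p.2)) := by
  ext p
  obtain ⟨a, b, c⟩ := p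
  simp only [mem_T3, mem_union, mem_image, mem_T2]
  constructor
  · intro h
    rcases Nat.lt_or_ge (a + b + c) (s+1) with h' | h'
    · left; omega
    · right
      refine ⟨(a, b), by omega, ?_⟩
      simp only [Prod.mk.injEq, true_and, and_true]; omega
  · rintro (h | ⟨q, hq, heq⟩)
    · omega
    · simp only [Prod.mk.injEq] at heq; omega

lemma card_T3 (s : ℕ) : 6 * (T3 s).card = (s+1) * (s+2) * (s+3) := by
  induction s with
  | zero => decide
  | succ s ih =>
    rw [T3_succ, card_union_of_disjoint, card_image_of_injOn]
    · have h2 := card_T2 (s+1)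
      ring_nf; ring_nf at ih h2; omega
    · intro p hp q hq h
      obtain ⟨a, b⟩ := p; obtain ⟨a', b'⟩ := q
      simp only [Prod.mk.injEq] at h ⊢
      omega
    · rw [Finset.disjoint_left]
      intro p hp hp2
      rw [mem_T3] at hp
      simp only [mem_image, mem_T2] at hp2
      obtain ⟨q, hq, rfl⟩ := hp2
      simp at hp; omega

lemma T4_succ (s : ℕ) :
    T4 (s+1) = T4 s ∪ (T3 (s+1)).image
      (fun p => ((p.1, p.2.1), p.2.2, s+1-p.1-p.2.1-p.2.2)) := by
  ext p
  obtain ⟨⟨a, b⟩, c, d⟩ := p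
  simp only [mem_T4, mem_union, mem_image, mem_T3]
  constructor
  · intro h
    rcases Nat.lt_or_ge (a + b + c + d) (s+1) with h' | h'
    · left; omega
    · right
      refine ⟨(a, b, c), by show a + b + c ≤ s + 1; omega, ?_⟩
      simp only [Prod.mk.injEq, true_and, and_true]; omega
  · rintro (h | ⟨q, hq, heq⟩)
    · omega
    · simp only [Prod.mk.injEq] at heq; omega

lemma card_T4 (s : ℕ) : 24 * (T4 s).card = (s+1) * (s+2) * (s+3) * (s+4) := by
  induction s with
  | zero => decide
  | succ s ih =>
    rw [T4_succ, card_union_of_disjoint, card_image_of_injOn]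
    · have h3 := card_T3 (s+1)
      ring_nf; ring_nf at ih h3; omega
    · intro p hp q hq h
      obtain ⟨a, b, c⟩ := p; obtain ⟨a', b', c'⟩ := q
      simp only [Prod.mk.injEq] at h ⊢
      omega
    · rw [Finset.disjoint_left]
      intro p hp hp2
      rw [mem_T4] at hp
      simp only [mem_image, mem_T3] at hp2
      obtain ⟨q, hq, rfl⟩ := hp2
      simp at hp; omega
/-- quadruples ((a,b),(c,d)) encoding the top-left 2×2 block (shifted) -/
def Fs (s : ℕ) : Finset ((ℕ × ℕ) × ℕ × ℕ) :=
  (T2 s ×ˢ T2 s).filter fun q =>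
    q.1.1 + q.2.1 ≤ s ∧ q.1.2 + q.2.2 ≤ s ∧ s ≤ q.1.1 + q.1.2 + q.2.1 + q.2.2

lemma mem_Fs {s : ℕ} {q : (ℕ × ℕ) × ℕ × ℕ} :
    q ∈ Fs s ↔ q.1.1 + q.1.2 ≤ s ∧ q.2.1 + q.2.2 ≤ s ∧
      q.1.1 + q.2.1 ≤ s ∧ q.1.2 + q.2.2 ≤ s ∧
      s ≤ q.1.1 + q.1.2 + q.2.1 + q.2.2 := by
  simp only [Fs, mem_filter, mem_product, mem_T2]
  tauto

def B1 (s : ℕ) : Finset ((ℕ × ℕ) × ℕ × ℕ) :=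
  (T2 s ×ˢ T2 s).filter fun q => s + 1 ≤ q.1.1 + q.2.1

def B2 (s : ℕ) : Finset ((ℕ × ℕ) × ℕ × ℕ) :=
  (T2 s ×ˢ T2 s).filter fun q => s + 1 ≤ q.1.2 + q.2.2

def B3 (s : ℕ) : Finset ((ℕ × ℕ) × ℕ × ℕ) :=
  (T2 s ×ˢ T2 s).filter fun q => q.1.1 + q.1.2 + q.2.1 + q.2.2 + 1 ≤ s

lemma mem_B1 {s : ℕ} {q : (ℕ × ℕ) × ℕ × ℕ} :
    q ∈ B1 s ↔ q.1.1 + q.1.2 ≤ s ∧ q.2.1 + q.2.2 ≤ s ∧ s + 1 ≤ q.1.1 + q.2.1 := by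
  simp only [B1, mem_filter, mem_product, mem_T2]; tauto

lemma mem_B2 {s : ℕ} {q : (ℕ × ℕ) × ℕ × ℕ} :
    q ∈ B2 s ↔ q.1.1 + q.1.2 ≤ s ∧ q.2.1 + q.2.2 ≤ s ∧ s + 1 ≤ q.1.2 + q.2.2 := by
  simp only [B2, mem_filter, mem_product, mem_T2]; tauto

lemma mem_B3 {s : ℕ} {q : (ℕ × ℕ) × ℕ × ℕ} :
    q ∈ B3 s ↔ q.1.1 + q.1.2 + q.2.1 + q.2.2 + 1 ≤ s := by
  simp only [B3, mem_filter, mem_product, mem_T2]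
  constructor
  · tauto
  · intro h; omega

lemma card_split (s : ℕ) :
    (T2 s).card * (T2 s).card
      = (Fs s).card + ((B1 s).card + (B2 s).card + (B3 s).card) := by
  classical
  have hsplit := Finset.card_filter_add_card_filter_not
    (s := T2 s ×ˢ T2 s)
    (p := fun q => q.1.1 + q.2.1 ≤ s ∧ q.1.2 + q.2.2 ≤ s ∧
      s ≤ q.1.1 + q.1.2 + q.2.1 + q.2.2)
  rw [card_product] at hsplit
  have hneg : (T2 s ×ˢ T2 s).filter (fun q => ¬(q.1.1 + q.2.1 ≤ s ∧
        q.1.2 + q.2.2 ≤ s ∧ s ≤ q.1.1 + q.1.2 + q.2.1 + q.2.2))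
      = B1 s ∪ (B2 s ∪ B3 s) := by
    ext q
    simp only [mem_filter, mem_product, mem_T2, mem_union, mem_B1, mem_B2, mem_B3]
    constructor
    · rintro ⟨⟨h1, h2⟩, h3⟩; omega
    · intro h
      constructor
      · constructor <;> omega
      · omega
  have hd23 : Disjoint (B2 s) (B3 s) := by
    rw [Finset.disjoint_left]
    intro q h2 h3
    rw [mem_B2] at h2; rw [mem_B3] at h3; omega
  have hd123 : Disjoint (B1 s) (B2 s ∪ B3 s) := by
    rw [Finset.disjoint_left]
    intro q h1 h23
    rw [mem_B1] at h1
    rw [mem_union, mem_B2, mem_B3] at h23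
    omega
  rw [hneg, card_union_of_disjoint hd123, card_union_of_disjoint hd23] at hsplit
  have hF : (T2 s ×ˢ T2 s).filter (fun q => q.1.1 + q.2.1 ≤ s ∧
      q.1.2 + q.2.2 ≤ s ∧ s ≤ q.1.1 + q.1.2 + q.2.1 + q.2.2) = Fs s := by
    ext q; simp only [Fs, mem_filter]
  rw [hF] at hsplit
  omega

lemma card_B3 (s : ℕ) : 24 * (B3 s).card = s * (s+1) * (s+2) * (s+3) := by
  cases s with
  | zero =>
    have : B3 0 = ∅ := by
      ext q; simp only [mem_B3, Finset.notMem_empty, iff_false]; omega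
    simp [this]
  | succ n =>
    have h : B3 (n+1) = T4 n := by
      ext q; rw [mem_B3, mem_T4]; omega
    rw [h]
    have := card_T4 n
    ring_nf; ring_nf at this; omega

lemma card_B1 (s : ℕ) : 24 * (B1 s).card = s * (s+1) * (s+2) * (s+3) := by
  cases s with
  | zero =>
    have : B1 0 = ∅ := by
      ext q; rw [mem_B1]; simp only [Finset.notMem_empty, iff_false]; omega
    simp [this]
  | succ n =>
    have h : B1 (n+1) = (T4 n).image
        (fun p => ((n+1-p.1.1-p.1.2, p.1.1), (n+1-p.2.1-p.2.2, p.2.1))) := by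
      ext q
      obtain ⟨⟨a, b⟩, c, d⟩ := q
      simp only [mem_B1, mem_image, mem_T4]
      constructor
      · intro h
        refine ⟨((b, n+1-a-b), (d, n+1-c-d)), ?_, ?_⟩
        · show b + (n+1-a-b) + d + (n+1-c-d) ≤ n
          omega
        · show ((n+1-b-(n+1-a-b), b), (n+1-d-(n+1-c-d), d)) = ((a, b), (c, d))
          simp only [Prod.mk.injEq, and_true, true_and]
          omega
      · rintro ⟨⟨⟨p, u⟩, r, w⟩, hmem, heq⟩
        simp only [Prod.mk.injEq] at heq
        obtain ⟨⟨h1, h2⟩, h3, h4⟩ := heq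
        simp only at hmem h1 h2 h3 h4
        omega
    rw [h, card_image_of_injOn]
    · have := card_T4 n
      ring_nf; ring_nf at this; omega
    · intro p hp q hq hpq
      obtain ⟨⟨a, b⟩, c, d⟩ := p; obtain ⟨⟨a', b'⟩, c', d'⟩ := q
      simp only [Finset.mem_coe, mem_T4] at hp hq
      simp only [Prod.mk.injEq] at hpq ⊢
      omega

lemma card_B2 (s : ℕ) : 24 * (B2 s).card = s * (s+1) * (s+2) * (s+3) := by
  cases s with
  | zero =>
    have : B2 0 = ∅ := by
      ext q; rw [mem_B2]; simp only [Finset.notMem_empty, iff_false]; omega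
    simp [this]
  | succ n =>
    have h : B2 (n+1) = (T4 n).image
        (fun p => ((p.1.1, n+1-p.1.1-p.1.2), (p.2.1, n+1-p.2.1-p.2.2))) := by
      ext q
      obtain ⟨⟨a, b⟩, c, d⟩ := q
      simp only [mem_B2, mem_image, mem_T4]
      constructor
      · intro h
        refine ⟨((a, n+1-a-b), (c, n+1-c-d)), ?_, ?_⟩
        · show a + (n+1-a-b) + c + (n+1-c-d) ≤ n
          omega
        · show ((a, n+1-a-(n+1-a-b)), (c, n+1-c-(n+1-c-d))) = ((a, b), (c, d))
          simp only [Prod.mk.injEq, and_true, true_and]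
          omega
      · rintro ⟨⟨⟨p, u⟩, r, w⟩, hmem, heq⟩
        simp only [Prod.mk.injEq] at heq
        obtain ⟨⟨h1, h2⟩, h3, h4⟩ := heq
        simp only at hmem h1 h2 h3 h4
        omega
    rw [h, card_image_of_injOn]
    · have := card_T4 n
      ring_nf; ring_nf at this; omega
    · intro p hp q hq hpq
      obtain ⟨⟨a, b⟩, c, d⟩ := p; obtain ⟨⟨a', b'⟩, c', d'⟩ := q
      simp only [Finset.mem_coe, mem_T4] at hp hq
      simp only [Prod.mk.injEq] at hpq ⊢
      omega

lemma card_Fs (s : ℕ) :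
    8 * ((Fs s).card : ℤ) = ((s:ℤ)+1) * ((s:ℤ)+2) * ((s:ℤ)^2+3*(s:ℤ)+4) := by
  have h0 := card_split s
  have h1 := card_B1 s
  have h2 := card_B2 s
  have h3 := card_B3 s
  have h4 := card_T2 s
  have e0 : ((T2 s).card : ℤ) * ((T2 s).card : ℤ)
      = ((Fs s).card : ℤ) + (((B1 s).card : ℤ) + ((B2 s).card : ℤ) + ((B3 s).card : ℤ)) := by
    exact_mod_cast congrArg (fun n : ℕ => (n : ℤ)) h0
  have e1 : 24 * ((B1 s).card : ℤ) = (s:ℤ) * ((s:ℤ)+1) * ((s:ℤ)+2) * ((s:ℤ)+3) := by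
    exact_mod_cast congrArg (fun n : ℕ => (n : ℤ)) h1
  have e2 : 24 * ((B2 s).card : ℤ) = (s:ℤ) * ((s:ℤ)+1) * ((s:ℤ)+2) * ((s:ℤ)+3) := by
    exact_mod_cast congrArg (fun n : ℕ => (n : ℤ)) h2
  have e3 : 24 * ((B3 s).card : ℤ) = (s:ℤ) * ((s:ℤ)+1) * ((s:ℤ)+2) * ((s:ℤ)+3) := by
    exact_mod_cast congrArg (fun n : ℕ => (n : ℤ)) h3
  have e4 : 2 * ((T2 s).card : ℤ) = ((s:ℤ)+1) * ((s:ℤ)+2) := by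
    exact_mod_cast congrArg (fun n : ℕ => (n : ℤ)) h4
  have e5 : (2 * ((T2 s).card : ℤ)) * (2 * ((T2 s).card : ℤ))
      = (((s:ℤ)+1) * ((s:ℤ)+2)) * (((s:ℤ)+1) * ((s:ℤ)+2)) := by rw [e4]
  have eB : 8 * (((B1 s).card : ℤ) + ((B2 s).card : ℤ) + ((B3 s).card : ℤ))
      = (s:ℤ) * ((s:ℤ)+1) * ((s:ℤ)+2) * ((s:ℤ)+3) := by linarith
  linear_combination (-8 : ℤ) * e0 + 2 * e5 - eB
/-- encode a quadruple as a 3×3 matrix with row/col sums `t` -/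
def Phi (t : ℕ) (q : (ℕ × ℕ) × ℕ × ℕ) : Matrix (Fin 3) (Fin 3) ℤ :=
  !![(q.1.1 : ℤ) + 1, (q.1.2 : ℤ) + 1, (t : ℤ) - q.1.1 - q.1.2 - 2;
     (q.2.1 : ℤ) + 1, (q.2.2 : ℤ) + 1, (t : ℤ) - q.2.1 - q.2.2 - 2;
     (t : ℤ) - q.1.1 - q.2.1 - 2, (t : ℤ) - q.1.2 - q.2.2 - 2,
       (q.1.1 : ℤ) + q.1.2 + q.2.1 + q.2.2 - t + 4]

lemma Sa_eq (t : ℕ) (ht : 3 ≤ t) :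
    {x : Matrix (Fin 3) (Fin 3) ℤ |
      (∀ i, ∑ j, x i j = (t : ℤ)) ∧ (∀ j, ∑ i, x i j = (t : ℤ)) ∧
      ∀ i j, 0 < x i j}
    = ↑((Fs (t - 3)).image (Phi t)) := by
  ext x
  simp only [Set.mem_setOf_eq, Finset.coe_image, Set.mem_image, Finset.mem_coe]
  constructor
  · rintro ⟨hr, hc, hpos⟩
    have hr0 := hr 0; have hr1 := hr 1; have hr2 := hr 2
    have hc0 := hc 0; have hc1 := hc 1; have hc2 := hc 2
    rw [Fin.sum_univ_three] at hr0 hr1 hr2 hc0 hc1 hc2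
    have p00 := hpos 0 0; have p01 := hpos 0 1; have p02 := hpos 0 2
    have p10 := hpos 1 0; have p11 := hpos 1 1; have p12 := hpos 1 2
    have p20 := hpos 2 0; have p21 := hpos 2 1; have p22 := hpos 2 2
    have e00 : ((x 0 0 - 1).toNat : ℤ) = x 0 0 - 1 := Int.toNat_of_nonneg (by omega)
    have e01 : ((x 0 1 - 1).toNat : ℤ) = x 0 1 - 1 := Int.toNat_of_nonneg (by omega)
    have e10 : ((x 1 0 - 1).toNat : ℤ) = x 1 0 - 1 := Int.toNat_of_nonneg (by omega)
    have e11 : ((x 1 1 - 1).toNat : ℤ) = x 1 1 - 1 := Int.toNat_of_nonneg (by omega)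
    refine ⟨(((x 0 0 - 1).toNat, (x 0 1 - 1).toNat),
             ((x 1 0 - 1).toNat, (x 1 1 - 1).toNat)), ?_, ?_⟩
    · rw [mem_Fs]
      refine ⟨?_, ?_, ?_, ?_, ?_⟩ <;> · dsimp only; omega
    · dsimp only [Phi]
      have E00 : x 0 0 = ((((x 0 0 - 1).toNat : ℕ) : ℤ) + 1) := by omega
      have E01 : x 0 1 = ((((x 0 1 - 1).toNat : ℕ) : ℤ) + 1) := by omega
      have E10 : x 1 0 = ((((x 1 0 - 1).toNat : ℕ) : ℤ) + 1) := by omega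
      have E11 : x 1 1 = ((((x 1 1 - 1).toNat : ℕ) : ℤ) + 1) := by omega
      have E02 : x 0 2
          = (t : ℤ) - ((x 0 0 - 1).toNat : ℤ) - ((x 0 1 - 1).toNat : ℤ) - 2 := by omega
      have E12 : x 1 2
          = (t : ℤ) - ((x 1 0 - 1).toNat : ℤ) - ((x 1 1 - 1).toNat : ℤ) - 2 := by omega
      have E20 : x 2 0
          = (t : ℤ) - ((x 0 0 - 1).toNat : ℤ) - ((x 1 0 - 1).toNat : ℤ) - 2 := by omega
      have E21 : x 2 1
          = (t : ℤ) - ((x 0 1 - 1).toNat : ℤ) - ((x 1 1 - 1).toNat : ℤ) - 2 := by omega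
      have E22 : x 2 2
          = ((x 0 0 - 1).toNat : ℤ) + ((x 0 1 - 1).toNat : ℤ)
            + ((x 1 0 - 1).toNat : ℤ) + ((x 1 1 - 1).toNat : ℤ) - (t : ℤ) + 4 := by omega
      conv_rhs => rw [Matrix.eta_fin_three x, E00, E01, E02, E10, E11, E12, E20, E21, E22]
  · rintro ⟨q, hq, rfl⟩
    rw [mem_Fs] at hq
    obtain ⟨⟨a, b⟩, c, d⟩ := q
    dsimp only at hq
    obtain ⟨h1, h2, h3, h4, h5⟩ := hq
    have hts : ((t - 3 : ℕ) : ℤ) = (t : ℤ) - 3 := by omega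
    refine ⟨?_, ?_, ?_⟩
    · intro i
      fin_cases i <;> rw [Fin.sum_univ_three] <;> simp [Phi] <;> ring
    · intro j
      fin_cases j <;> rw [Fin.sum_univ_three] <;> simp [Phi] <;> ring
    · intro i j
      fin_cases i <;> fin_cases j <;> simp [Phi] <;> omega
/-- `WeakSa t` = number of weak 3×3 semimagic squares (entries not required to
be distinct) with positive entries whose row and column sums all equal t. -/
noncomputable def WeakSa (t : ℕ) : ℕ :=
  {x : Matrix (Fin 3) (Fin 3) ℤ |
    (∀ i, ∑ j, x i j = (t : ℤ)) ∧ (∀ j, ∑ i, x i j = (t : ℤ)) ∧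
    ∀ i j, 0 < x i j}.ncard

theorem weak_semimagic_affine_count (t : ℕ) (ht : 1 ≤ t) :
    8 * (WeakSa t : ℤ) =
      ((t : ℤ) - 1) * ((t : ℤ) - 2) * ((t : ℤ)^2 - 3*(t : ℤ) + 4) := by
  rcases Nat.lt_or_ge t 3 with h3 | h3
  · have hempty : {x : Matrix (Fin 3) (Fin 3) ℤ |
        (∀ i, ∑ j, x i j = (t : ℤ)) ∧ (∀ j, ∑ i, x i j = (t : ℤ)) ∧
        ∀ i j, 0 < x i j} = ∅ := by
      ext x
      simp only [Set.mem_setOf_eq, Set.mem_empty_iff_false, iff_false, not_and]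
      intro hr hc
      intro hpos
      have h0 := hr 0
      rw [Fin.sum_univ_three] at h0
      have p0 := hpos 0 0; have p1 := hpos 0 1; have p2 := hpos 0 2
      omega
    have : WeakSa t = 0 := by rw [WeakSa, hempty, Set.ncard_empty]
    rw [this]
    interval_cases t
    · norm_num
    · norm_num
  · have hw : (WeakSa t : ℤ) = ((Fs (t - 3)).card : ℤ) := by
      rw [WeakSa, Sa_eq t h3, Set.ncard_coe_finset, card_image_of_injOn]
      intro q hq q' hq' h
      obtain ⟨⟨a, b⟩, c, d⟩ := q; obtain ⟨⟨a', b'⟩, c', d'⟩ := q'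
      have h00 := congrFun (congrFun h 0) 0
      have h01 := congrFun (congrFun h 0) 1
      have h10 := congrFun (congrFun h 1) 0
      have h11 := congrFun (congrFun h 1) 1
      simp [Phi] at h00 h01 h10 h11
      simp only [Prod.mk.injEq]
      omega
    rw [hw]
    have hc := card_Fs (t - 3)
    have hcast : ((t - 3 : ℕ) : ℤ) = (t : ℤ) - 3 := by omega
    rw [hcast] at hc
    rw [hc]
    ring
end
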